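/- There exists a constant C < ∞ such that for every ℓ with 0 < ℓ < 2·arsinh(1), one has | 8π·∫_{−X(ℓ)}^{X(ℓ)} ρ_ℓ(s)^{−2} ds − ( 32π⁵/ℓ³ − 16π⁴/3 ) | ≤ C·ℓ², where ρ_ℓ(s) = ℓ/(2π·cos(ℓ·s/(2π))) and X(ℓ) = (2π/ℓ)·(π/2 − arctan(sinh(ℓ/2))). -/

import Mathlib

/-- Half-length of the hyperbolic collar around a geodesic of length `ℓ`. -/
noncomputable def collarX (ℓ : ℝ) : ℝ :=
  2 * Real.pi / ℓ * (Real.pi / 2 - Real.arctan (Real.sinh (ℓ / 2)))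

/-- Conformal factor of the hyperbolic collar. -/
noncomputable def collarRho (ℓ s : ℝ) : ℝ :=
  ℓ / (2 * Real.pi * Real.cos (ℓ * s / (2 * Real.pi)))

/-!
The substitution `u = ℓ s / (2π)` turns the integral into `(2π/ℓ)³ ∫_{-A}^{A} cos² u du
= (2π/ℓ)³ (A + sin A cos A)` with `A = π/2 - arctan (sinh t)`, `t = ℓ/2`, and
`sin A = 1 / cosh t`, `cos A = tanh t`. Hence the error term is `(64π⁴/ℓ³) φ(t)` with
`φ(t) = sinh t / cosh² t - arctan (sinh t) + 2t³/3`. Here `φ(0) = 0` and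
`φ'(t) = 2 (t² cosh³ t - sinh² t) / cosh³ t`, whose numerator lies in `[0, 7t⁴]` for `t ≤ 1`
by `t ≤ sinh t ≤ t cosh t` and `cosh t - 1 ≤ t²`; so `|φ(t)| ≤ 14 t⁵` and the error is
`O(ℓ²)`.
-/

open Real Set

namespace Real

lemma sinh_le_mul_cosh {x : ℝ} (hx : 0 ≤ x) : sinh x ≤ x * cosh x := by
  have hmono : MonotoneOn (fun y => y * cosh y - sinh y) (Ici 0) := by
    refine monotoneOn_of_hasDerivWithinAt_nonneg (f' := fun y => y * sinh y) (convex_Ici 0)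
      (by fun_prop) (fun y _ => ?_) (fun y hy => ?_)
    · refine (((hasDerivAt_id y).mul (hasDerivAt_cosh y)).sub
        (hasDerivAt_sinh y)).hasDerivWithinAt.congr_deriv ?_
      simp only [id]
      ring
    · rw [interior_Ici] at hy
      exact mul_nonneg hy.le (sinh_nonneg_iff.2 hy.le)
  simpa using hmono self_mem_Ici hx hx

lemma cosh_sub_one_le_sq {x : ℝ} (hx : x ^ 2 ≤ 2) : cosh x - 1 ≤ x ^ 2 := by
  have hexp : |exp (x ^ 2 / 2) - 1| ≤ 2 * |x ^ 2 / 2| :=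
    abs_exp_sub_one_le (by rw [abs_of_nonneg (by positivity)]; linarith)
  rw [abs_of_nonneg (by positivity : 0 ≤ x ^ 2 / 2)] at hexp
  linarith [cosh_le_exp_half_sq x, (abs_le.1 hexp).2]

lemma sin_pi_div_two_sub_arctan_sinh (x : ℝ) :
    sin (π / 2 - arctan (sinh x)) = 1 / cosh x := by
  rw [sin_pi_div_two_sub, cos_arctan, ← cosh_sq', sqrt_sq (cosh_pos x).le]

lemma cos_pi_div_two_sub_arctan_sinh (x : ℝ) :
    cos (π / 2 - arctan (sinh x)) = sinh x / cosh x := by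
  rw [cos_pi_div_two_sub, sin_arctan, ← cosh_sq', sqrt_sq (cosh_pos x).le]

end Real

lemma inv_collarRho_sq (ℓ s : ℝ) :
    (collarRho ℓ s ^ 2)⁻¹ = (2 * π / ℓ) ^ 2 * cos (s * (ℓ / (2 * π))) ^ 2 := by
  rw [collarRho, ← inv_pow, inv_div, mul_div_right_comm, mul_pow, mul_div_assoc', mul_comm s]

lemma collarX_mul {ℓ : ℝ} (hℓ : ℓ ≠ 0) :
    collarX ℓ * (ℓ / (2 * π)) = π / 2 - arctan (sinh (ℓ / 2)) := by
  rw [collarX]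
  field_simp

lemma integral_inv_collarRho_sq {ℓ : ℝ} (hℓ : ℓ ≠ 0) :
    ∫ s in (-(collarX ℓ))..(collarX ℓ), (collarRho ℓ s ^ 2)⁻¹
      = (2 * π / ℓ) ^ 3 *
        (π / 2 - arctan (sinh (ℓ / 2)) + sinh (ℓ / 2) / cosh (ℓ / 2) ^ 2) := by
  have hc : ℓ / (2 * π) ≠ 0 := div_ne_zero hℓ (by positivity)
  simp_rw [inv_collarRho_sq, intervalIntegral.integral_const_mul]
  rw [intervalIntegral.integral_comp_mul_right (fun u => cos u ^ 2) hc, neg_mul, collarX_mul hℓ,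
    integral_cos_sq, cos_neg, sin_neg, sin_pi_div_two_sub_arctan_sinh,
    cos_pi_div_two_sub_arctan_sinh, smul_eq_mul, inv_div]
  have := (cosh_pos (ℓ / 2)).ne'
  field_simp
  ring

noncomputable def collarRemainder (t : ℝ) : ℝ :=
  sinh t / cosh t ^ 2 - arctan (sinh t) + 2 / 3 * t ^ 3

lemma hasDerivAt_collarRemainder (t : ℝ) :
    HasDerivAt collarRemainder (2 * (t ^ 2 * cosh t ^ 3 - sinh t ^ 2) / cosh t ^ 3) t := by
  have hc := (cosh_pos t).ne'
  have h := (((hasDerivAt_sinh t).div ((hasDerivAt_cosh t).pow 2) (pow_ne_zero 2 hc)).sub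
    (hasDerivAt_sinh t).arctan).add ((hasDerivAt_pow 3 t).const_mul (2 / 3 : ℝ))
  refine h.congr_deriv ?_
  simp only [Pi.pow_apply]
  rw [← cosh_sq']
  field_simp
  ring

lemma collarRemainder_deriv_numerator_bounds {t : ℝ} (ht₀ : 0 ≤ t) (ht₁ : t ≤ 1) :
    0 ≤ t ^ 2 * cosh t ^ 3 - sinh t ^ 2 ∧ t ^ 2 * cosh t ^ 3 - sinh t ^ 2 ≤ 7 * t ^ 4 := by
  have hc₁ := one_le_cosh t
  have hcosh : cosh t - 1 ≤ t ^ 2 := cosh_sub_one_le_sq (by nlinarith)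
  have hsinh_lower : t ^ 2 ≤ sinh t ^ 2 := pow_le_pow_left₀ ht₀ (self_le_sinh_iff.2 ht₀) 2
  have hsinh_upper : sinh t ^ 2 ≤ (t * cosh t) ^ 2 :=
    pow_le_pow_left₀ (sinh_nonneg_iff.2 ht₀) (sinh_le_mul_cosh ht₀) 2
  constructor
  · nlinarith [mul_le_mul_of_nonneg_left hc₁ (sq_nonneg (t * cosh t))]
  · have hc₂ : cosh t ≤ 2 := by nlinarith
    have hquad : cosh t ^ 2 + cosh t + 1 ≤ 7 := by nlinarith
    have hcube : cosh t ^ 3 - 1 ≤ 7 * t ^ 2 := by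
      nlinarith [mul_le_mul_of_nonneg_left hcosh (by positivity : 0 ≤ cosh t ^ 2 + cosh t + 1),
        mul_le_mul_of_nonneg_left hquad (sq_nonneg t)]
    nlinarith [mul_le_mul_of_nonneg_left hcube (sq_nonneg t)]

lemma abs_collarRemainder_le {t : ℝ} (ht₀ : 0 ≤ t) (ht₁ : t ≤ 1) :
    |collarRemainder t| ≤ 14 * t ^ 5 := by
  have hbound : ∀ x ∈ Ico 0 t,
      ‖2 * (x ^ 2 * cosh x ^ 3 - sinh x ^ 2) / cosh x ^ 3‖ ≤ 14 * t ^ 4 := by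
    rintro x ⟨hx₀, hxt⟩
    obtain ⟨hnum₀, hnum₁⟩ := collarRemainder_deriv_numerator_bounds hx₀ (hxt.le.trans ht₁)
    have hc₃ : 1 ≤ cosh x ^ 3 := one_le_pow₀ (one_le_cosh x)
    rw [norm_of_nonneg (by positivity), div_le_iff₀ (by positivity)]
    nlinarith [pow_le_pow_left₀ hx₀ hxt.le 4]
  have h := norm_image_sub_le_of_norm_deriv_le_segment'
    (fun x _ => (hasDerivAt_collarRemainder x).hasDerivWithinAt) hbound t ⟨ht₀, le_rfl⟩
  have h0 : collarRemainder 0 = 0 := by simp [collarRemainder]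
  rw [h0, sub_zero, sub_zero, norm_eq_abs] at h
  linarith

lemma eight_pi_integral_inv_collarRho_sq_sub_eq {ℓ : ℝ} (hℓ : ℓ ≠ 0) :
    8 * π * (∫ s in (-(collarX ℓ))..(collarX ℓ), (collarRho ℓ s ^ 2)⁻¹)
        - (32 * π ^ 5 / ℓ ^ 3 - 16 * π ^ 4 / 3)
      = 64 * π ^ 4 / ℓ ^ 3 * collarRemainder (ℓ / 2) := by
  rw [integral_inv_collarRho_sq hℓ, collarRemainder]
  field_simp
  ring

/-- `‖dz²‖²_{L²(𝒞(ℓ))} = 8π·∫_{-X(ℓ)}^{X(ℓ)} ρ_ℓ(s)⁻² ds = 32π⁵/ℓ³ − 16π⁴/3 + O(ℓ²)`. -/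
theorem dz2_L2_norm_expansion :
    ∃ C : ℝ, ∀ ℓ : ℝ, 0 < ℓ → ℓ < 2 * Real.arsinh 1 →
      |8 * Real.pi * (∫ s in (-(collarX ℓ))..(collarX ℓ), (collarRho ℓ s ^ 2)⁻¹)
          - (32 * Real.pi ^ 5 / ℓ ^ 3 - 16 * Real.pi ^ 4 / 3)| ≤ C * ℓ ^ 2 := by
  refine ⟨28 * π ^ 4, fun ℓ hℓ hℓ_lt => ?_⟩
  have ht₁ : ℓ / 2 ≤ 1 := by
    have hsinh : sinh (ℓ / 2) < 1 :=
      (sinh_lt_sinh.2 (by linarith : ℓ / 2 < arsinh 1)).trans_eq (sinh_arsinh 1)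
    linarith [self_le_sinh_iff.2 (by positivity : 0 ≤ ℓ / 2)]
  rw [eight_pi_integral_inv_collarRho_sq_sub_eq hℓ.ne', abs_mul, abs_of_pos (by positivity)]
  calc 64 * π ^ 4 / ℓ ^ 3 * |collarRemainder (ℓ / 2)|
      ≤ 64 * π ^ 4 / ℓ ^ 3 * (14 * (ℓ / 2) ^ 5) := by
        gcongr
        exact abs_collarRemainder_le (by positivity) ht₁
    _ = 28 * π ^ 4 * ℓ ^ 2 := by
        field_simp
        ring
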